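/- arXiv:2406.00823 — 4 statements merged into one kernel-verified Lean document; each statement's English description precedes it below -/
import Mathlib

section
/- (Oracle inequality for the weighted squared-error Lasso.) Let β* ∈ ℝ^d with support S₀ of cardinality s₀. Let x_1,…,x_n ∈ ℝ^d be (random) vectors, let η_1,…,η_n be real random variables, and set r_t = x_tᵀβ* + η_t. Let w_1,…,w_n ≥ 0, λ_n > 0, and let β̂ be a minimizer over β ∈ ℝ^d of λ_n·‖β‖₁ + Σ_{t=1}^n w_t·(r_t − x_tᵀβ)². Let V̂_n = Σ_{t=1}^n w_t·x_t x_tᵀ and suppose φ²(V̂_n, S₀) ≥ φ_n² > 0. Then, on the event { max_{j ∈ {1,…,d}} |Σ_{t=1}^n w_t·η_t·(x_t)_j| ≤ λ_n/4 }, one has ‖β* − β̂‖₁ ≤ 2·λ_n·s₀/φ_n². -/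
set_option autoImplicit false

open MeasureTheory ProbabilityTheory Matrix Finset
open scoped Classical ENNReal

noncomputable section

namespace Paper

section Compat

variable {ι : Type*} [Fintype ι] [DecidableEq ι]

/-- The ℓ¹ norm of a vector. -/
def l1 (v : ι → ℝ) : ℝ := ∑ j, |v j|

/-- The restriction of a vector to an index set. -/
def restr (S : Finset ι) (v : ι → ℝ) : ι → ℝ := fun j => if j ∈ S then v j else 0

/-- The compatibility constant `φ²(M, S)`. -/
def compat (M : Matrix ι ι ℝ) (S : Finset ι) : ℝ :=
  sInf {c : ℝ | ∃ v : ι → ℝ, l1 (restr Sᶜ v) ≤ 3 * l1 (restr S v) ∧ restr S v ≠ 0 ∧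
    c = (S.card : ℝ) * (v ⬝ᵥ (M *ᵥ v)) / l1 (restr S v) ^ 2}

/-- The expected Gram matrix `E[x xᵀ]` of a random vector. -/
def gram {Ω : Type*} [MeasurableSpace Ω] (P : Measure Ω) (x : Ω → ι → ℝ) : Matrix ι ι ℝ :=
  Matrix.of fun i j => ∫ ω, x ω i * x ω j ∂P

/-- The conditional Gram matrix `E[x xᵀ | A]`. -/
def condGram {Ω : Type*} [MeasurableSpace Ω] (P : Measure Ω) (A : Set Ω) (x : Ω → ι → ℝ) :
    Matrix ι ι ℝ :=
  Matrix.of fun i j => (∫ ω in A, x ω i * x ω j ∂P) / (P A).toReal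

end Compat

section Aux

variable {ι : Type*} [Fintype ι] [DecidableEq ι]

lemma l1_nonneg' (v : ι → ℝ) : 0 ≤ l1 v :=
  Finset.sum_nonneg fun _ _ => abs_nonneg _

lemma l1_restr' (S : Finset ι) (v : ι → ℝ) : l1 (restr S v) = ∑ j ∈ S, |v j| := by
  unfold l1 restr
  simp_rw [apply_ite abs, abs_zero, Finset.sum_ite_mem, Finset.univ_inter]

lemma l1_split' (S : Finset ι) (v : ι → ℝ) : l1 v = l1 (restr S v) + l1 (restr Sᶜ v) := by
  rw [l1_restr', l1_restr']
  exact (Finset.sum_add_sum_compl S _).symm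

lemma l1_pos_of_ne' (S : Finset ι) (v : ι → ℝ) (h : restr S v ≠ 0) : 0 < l1 (restr S v) := by
  rcases (l1_nonneg' (restr S v)).lt_or_eq with h' | h'
  · exact h'
  · exfalso; apply h
    funext j
    have := (Finset.sum_eq_zero_iff_of_nonneg
      (fun j _ => abs_nonneg (restr S v j))).mp h'.symm
    simpa using abs_eq_zero.mp (this j (Finset.mem_univ j))

lemma quad_eq {d n : ℕ} (x : Fin n → Fin d → ℝ) (w : Fin n → ℝ) (v : Fin d → ℝ) :
    v ⬝ᵥ ((Matrix.of fun i j => ∑ t, w t * (x t i * x t j)) *ᵥ v)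
      = ∑ t, w t * (x t ⬝ᵥ v) ^ 2 := by
  simp only [Matrix.mulVec, Matrix.of_apply, dotProduct]
  calc ∑ i, v i * ∑ j, (∑ t, w t * (x t i * x t j)) * v j
      = ∑ i, ∑ t, ∑ j, w t * x t i * x t j * (v i * v j) := by
        refine Finset.sum_congr rfl fun i _ => ?_
        rw [Finset.mul_sum, Finset.sum_comm]
        refine Finset.sum_congr rfl fun t _ => ?_
        rw [Finset.sum_mul, Finset.mul_sum]
        exact Finset.sum_congr rfl fun s _ => by ring
    _ = ∑ t, ∑ i, ∑ j, w t * x t i * x t j * (v i * v j) := Finset.sum_comm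
    _ = ∑ t, w t * (∑ i, x t i * v i) ^ 2 := by
        refine Finset.sum_congr rfl fun t _ => ?_
        rw [sq, Finset.sum_mul_sum, Finset.mul_sum]
        refine Finset.sum_congr rfl fun i _ => ?_
        rw [Finset.mul_sum]
        exact Finset.sum_congr rfl fun j _ => by ring

lemma quad_nonneg {d n : ℕ} (x : Fin n → Fin d → ℝ) (w : Fin n → ℝ) (hw : ∀ t, 0 ≤ w t)
    (v : Fin d → ℝ) :
    0 ≤ v ⬝ᵥ ((Matrix.of fun i j => ∑ t, w t * (x t i * x t j)) *ᵥ v) := by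
  rw [quad_eq]
  exact Finset.sum_nonneg fun t _ => mul_nonneg (hw t) (sq_nonneg _)

end Aux

set_option maxHeartbeats 1000000 in
/-- **Oracle inequality for the weighted squared-error Lasso estimator**. -/
theorem weighted_lasso_oracle {d n : ℕ} (βstar : Fin d → ℝ) (S0 : Finset (Fin d))
    (hS0 : S0 = Finset.univ.filter fun j => βstar j ≠ 0)
    (x : Fin n → Fin d → ℝ) (η : Fin n → ℝ) (r : Fin n → ℝ)
    (hr : ∀ t, r t = x t ⬝ᵥ βstar + η t)
    (w : Fin n → ℝ) (hw : ∀ t, 0 ≤ w t) (lam : ℝ) (hlam : 0 < lam)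
    (βhat : Fin d → ℝ)
    (hmin : ∀ β : Fin d → ℝ,
      lam * l1 βhat + ∑ t, w t * (r t - x t ⬝ᵥ βhat) ^ 2 ≤
        lam * l1 β + ∑ t, w t * (r t - x t ⬝ᵥ β) ^ 2)
    (φn : ℝ) (hφn : 0 < φn)
    (hcompat : compat (Matrix.of fun i j => ∑ t, w t * (x t i * x t j)) S0 ≥ φn ^ 2)
    (hnoise : ∀ j, |∑ t, w t * η t * x t j| ≤ lam / 4) :
    l1 (βstar - βhat) ≤ 2 * lam * S0.card / φn ^ 2 := by
  set v : Fin d → ℝ := βstar - βhat with hv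
  set a : Fin n → ℝ := fun t => x t ⬝ᵥ v with ha
  set Q : ℝ := ∑ t, w t * a t ^ 2 with hQdef
  set E : ℝ := ∑ t, w t * η t * a t with hEdef
  set LS : ℝ := l1 (restr S0 v) with hLS
  set LC : ℝ := l1 (restr S0ᶜ v) with hLC
  have hQ0 : 0 ≤ Q := Finset.sum_nonneg fun t _ => mul_nonneg (hw t) (sq_nonneg _)
  have hLC0 : 0 ≤ LC := l1_nonneg' _
  -- basic inequality
  have hbasic : Q + 2 * E ≤ lam * (l1 βstar - l1 βhat) := by
    have hb := hmin βstar
    have h2 : ∀ t, r t - x t ⬝ᵥ βhat = η t + a t := by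
      intro t
      rw [hr, ha]
      simp only [hv, dotProduct_sub]
      ring
    have hsq : ∑ t, w t * (r t - x t ⬝ᵥ βhat) ^ 2
        = (∑ t, w t * η t ^ 2) + (2 * E + Q) := by
      calc ∑ t, w t * (r t - x t ⬝ᵥ βhat) ^ 2
          = ∑ t, (w t * η t ^ 2 + (2 * (w t * η t * a t) + w t * a t ^ 2)) := by
            refine Finset.sum_congr rfl fun t _ => ?_
            rw [h2 t]; ring
        _ = (∑ t, w t * η t ^ 2) + (2 * E + Q) := by
            rw [Finset.sum_add_distrib, Finset.sum_add_distrib, ← Finset.mul_sum]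
    have hsq2 : ∑ t, w t * (r t - x t ⬝ᵥ βstar) ^ 2 = ∑ t, w t * η t ^ 2 := by
      refine Finset.sum_congr rfl fun t _ => ?_
      rw [hr]; ring_nf
    rw [hsq, hsq2] at hb
    linarith
  -- noise bound
  have hE : |E| ≤ lam / 4 * (LS + LC) := by
    have hswap : E = ∑ j, v j * (∑ t, w t * η t * x t j) := by
      calc E = ∑ t, ∑ j, v j * (w t * η t * x t j) := by
            refine Finset.sum_congr rfl fun t _ => ?_
            simp only [ha, dotProduct, Finset.mul_sum]
            exact Finset.sum_congr rfl fun j _ => by ring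
        _ = ∑ j, ∑ t, v j * (w t * η t * x t j) := Finset.sum_comm
        _ = ∑ j, v j * ∑ t, w t * η t * x t j := by
            exact Finset.sum_congr rfl fun j _ => (Finset.mul_sum _ _ _).symm
    have h1 : |E| ≤ ∑ j, |v j| * (lam / 4) := by
      rw [hswap]
      refine (Finset.abs_sum_le_sum_abs _ _).trans ?_
      refine Finset.sum_le_sum fun j _ => ?_
      rw [abs_mul]
      exact mul_le_mul_of_nonneg_left (hnoise j) (abs_nonneg _)
    rw [← Finset.sum_mul] at h1
    rw [show (∑ j, |v j|) = l1 v from rfl, l1_split' S0 v, ← hLS, ← hLC] at h1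
    linarith
  -- support of βstar
  have hstar0 : ∀ j ∈ S0ᶜ, βstar j = 0 := by
    intro j hj
    by_contra h
    exact (Finset.mem_compl.mp hj) (hS0 ▸ Finset.mem_filter.mpr ⟨Finset.mem_univ j, h⟩)
  -- l1 comparison
  have hl1le : l1 βstar - l1 βhat ≤ LS - LC := by
    rw [l1_split' S0 βstar, l1_split' S0 βhat, hLS, hLC]
    simp only [l1_restr']
    have e1 : ∑ j ∈ S0ᶜ, |βstar j| = 0 :=
      Finset.sum_eq_zero fun j hj => by rw [hstar0 j hj, abs_zero]
    have e2 : ∑ j ∈ S0ᶜ, |βhat j| = ∑ j ∈ S0ᶜ, |v j| := by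
      refine Finset.sum_congr rfl fun j hj => ?_
      rw [hv, Pi.sub_apply, hstar0 j hj, zero_sub, abs_neg]
    have e3 : ∑ j ∈ S0, |βstar j| - ∑ j ∈ S0, |βhat j| ≤ ∑ j ∈ S0, |v j| := by
      rw [← Finset.sum_sub_distrib]
      exact Finset.sum_le_sum fun j _ => abs_sub_abs_le_abs_sub _ _
    linarith
  -- key inequality
  have hkey : Q ≤ 3 / 2 * lam * LS - 1 / 2 * lam * LC := by
    have hp : lam * (l1 βstar - l1 βhat) ≤ lam * (LS - LC) :=
      mul_le_mul_of_nonneg_left hl1le hlam.le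
    have hE' := neg_le_of_abs_le hE
    nlinarith [hbasic, hp, hE']
  -- cone condition
  have hcone : LC ≤ 3 * LS := by
    have h1 : lam * LC ≤ lam * (3 * LS) := by nlinarith [hkey, hQ0]
    exact (mul_le_mul_iff_right₀ hlam).mp h1
  by_cases hne : restr S0 v = 0
  · -- degenerate case
    have hLS0 : LS = 0 := by rw [hLS, hne]; simp [l1]
    have hRHS : 0 ≤ 2 * lam * (S0.card : ℝ) / φn ^ 2 := by positivity
    have hsp : l1 v = LS + LC := by rw [hLS, hLC]; exact l1_split' S0 v
    have hLC0' : LC ≤ 0 := by linarith [hcone]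
    linarith
  · have hLSpos : 0 < LS := l1_pos_of_ne' S0 v hne
    -- compatibility bound
    set M : Matrix (Fin d) (Fin d) ℝ :=
      Matrix.of fun i j => ∑ t, w t * (x t i * x t j) with hM
    have hQv : v ⬝ᵥ (M *ᵥ v) = Q := by
      rw [hM, quad_eq]
    have hbdd : BddBelow {c : ℝ | ∃ u : Fin d → ℝ,
        l1 (restr S0ᶜ u) ≤ 3 * l1 (restr S0 u) ∧ restr S0 u ≠ 0 ∧
        c = (S0.card : ℝ) * (u ⬝ᵥ (M *ᵥ u)) / l1 (restr S0 u) ^ 2} := by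
      refine ⟨0, fun c hc => ?_⟩
      obtain ⟨u, _, hu, rfl⟩ := hc
      have := quad_nonneg x w hw u
      rw [← hM] at this
      positivity
    have hmem : (S0.card : ℝ) * (v ⬝ᵥ (M *ᵥ v)) / l1 (restr S0 v) ^ 2 ∈
        {c : ℝ | ∃ u : Fin d → ℝ,
        l1 (restr S0ᶜ u) ≤ 3 * l1 (restr S0 u) ∧ restr S0 u ≠ 0 ∧
        c = (S0.card : ℝ) * (u ⬝ᵥ (M *ᵥ u)) / l1 (restr S0 u) ^ 2} :=
      ⟨v, by rw [← hLC, ← hLS]; exact hcone, hne, rfl⟩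
    have h5 : φn ^ 2 ≤ (S0.card : ℝ) * Q / LS ^ 2 := by
      refine le_trans hcompat ?_
      have := csInf_le hbdd hmem
      rw [hQv, ← hLS] at this
      exact this
    have h6 : φn ^ 2 * LS ^ 2 ≤ (S0.card : ℝ) * Q := by
      rw [le_div_iff₀ (by positivity : (0:ℝ) < LS ^ 2)] at h5
      linarith
    have hsplitv : l1 v = LS + LC := by rw [hLS, hLC]; exact l1_split' S0 v
    -- AM-GM step
    clear_value LC LS E Q a v
    have hB : (0:ℝ) ≤ Q * φn ^ 2 + lam ^ 2 * (S0.card : ℝ) := by positivity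
    have h7 : 2 * lam * LS * φn ^ 2 ≤ Q * φn ^ 2 + lam ^ 2 * (S0.card : ℝ) := by
      nlinarith [hB, sq_nonneg (Q * φn ^ 2 - lam ^ 2 * (S0.card : ℝ)),
        mul_le_mul_of_nonneg_left h6 (by positivity : (0:ℝ) ≤ 4 * lam ^ 2 * φn ^ 2)]
    have hA : Q * φn ^ 2 ≤ (3 / 2 * lam * LS - 1 / 2 * lam * LC) * φn ^ 2 :=
      mul_le_mul_of_nonneg_right hkey (sq_nonneg φn)
    have h8 : lam * ((LS + LC) * φn ^ 2) ≤ lam * (2 * lam * (S0.card : ℝ)) := by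
      linarith [hA, h7]
    have h9 : (LS + LC) * φn ^ 2 ≤ 2 * lam * (S0.card : ℝ) :=
      le_of_mul_le_mul_left h8 hlam
    rw [le_div_iff₀ (by positivity : (0:ℝ) < φn ^ 2)]
    rw [hsplitv]
    exact h9

end Paper
end
end

section
/- Suppose C ≥ 2, b ≥ 1, and n ≥ C·b + 2·C·log(2·log 2C + b). Then (2·log log 2n + b)/n ≤ 1/C. -/
/-!
Write `n₀ = C b + 2 C log A` with `A = 2 log (2C) + b`, so that the claim reads
`4C log log (2n) - 2n ≤ -2Cb`. At `n = n₀` this holds because `log (2 n₀) ≤ A`, i.e.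
`2 n₀ ≤ (2C)² eᵇ`, which follows from `log x ≤ x / 2` and `1 + b ≤ eᵇ`. Beyond `n₀` the left side
decreases: by concavity, `log log` lies below its tangent at `2 n₀`, whose slope `1 / (2 n₀ log (2 n₀))`
is at most `1 / (4C)`.
-/

set_option autoImplicit false

noncomputable section

namespace Paper

open Real

lemma log_le_log_add_sub_div {x y : ℝ} (hx : 0 < x) (hy : 0 < y) :
    log y ≤ log x + (y - x) / x := by
  have h := log_le_sub_one_of_pos (div_pos hy hx)
  rw [log_div hy.ne' hx.ne'] at h
  rwa [sub_div, div_self hx.ne', ← sub_le_iff_le_add']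

lemma log_le_half_self {x : ℝ} (hx : 0 < x) : log x ≤ x / 2 := by
  have h := log_le_log_add_sub_div two_pos hx
  linarith [log_two_lt_d9]

lemma log_log_le_log_log_add {x y : ℝ} (hx : 1 < x) (hy : 1 < y) :
    log (log y) ≤ log (log x) + (y - x) / (x * log x) := by
  have hlogx : 0 < log x := log_pos hx
  have houter := log_le_log_add_sub_div hlogx (log_pos hy)
  have hinner : log y - log x ≤ (y - x) / x := by
    linarith [log_le_log_add_sub_div (zero_lt_one.trans hx) (zero_lt_one.trans hy)]
  calc log (log y) ≤ log (log x) + (log y - log x) / log x := houter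
    _ ≤ log (log x) + (y - x) / x / log x := by gcongr
    _ = log (log x) + (y - x) / (x * log x) := by rw [div_div]

lemma mul_log_log_sub_le_of_le {a x y : ℝ} (hx : 1 < x) (hxy : x ≤ y) (ha : 0 ≤ a)
    (hax : a ≤ x * log x) :
    a * log (log y) - y ≤ a * log (log x) - x := by
  have hslope : 0 < x * log x := mul_pos (zero_lt_one.trans hx) (log_pos hx)
  have htangent := log_log_le_log_log_add hx (hx.trans_le hxy)
  have hrise : a * ((y - x) / (x * log x)) ≤ y - x := by
    rw [mul_div_assoc', div_le_iff₀ hslope, mul_comm (y - x)]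
    exact mul_le_mul_of_nonneg_right hax (sub_nonneg.2 hxy)
  linarith [mul_le_mul_of_nonneg_left htangent ha]

def loglogThreshold (C b : ℝ) : ℝ :=
  C * b + 2 * C * log (2 * log (2 * C) + b)

lemma two_mul_le_loglogThreshold {C b : ℝ} (hC : 1 ≤ C) (hb : 1 ≤ b) :
    2 * C ≤ loglogThreshold C b := by
  have hlog2C : log 2 ≤ log (2 * C) := log_le_log two_pos (by linarith)
  have hlogA : log 2 ≤ log (2 * log (2 * C) + b) :=
    log_le_log two_pos (by linarith [log_two_gt_d9])
  unfold loglogThreshold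
  nlinarith [log_two_gt_d9]

lemma log_two_mul_loglogThreshold_le {C b : ℝ} (hC : 1 ≤ C) (hb : 1 ≤ b) :
    log (2 * loglogThreshold C b) ≤ 2 * log (2 * C) + b := by
  have hthreshold : 0 < loglogThreshold C b := by
    linarith [two_mul_le_loglogThreshold hC hb]
  unfold loglogThreshold at hthreshold ⊢
  set A := 2 * log (2 * C) + b with hA
  have hlogA : log A ≤ A / 2 :=
    log_le_half_self (by linarith [log_nonneg (by linarith : (1 : ℝ) ≤ 2 * C)])
  have hlog2C : log (2 * C) ≤ C := by linarith [log_le_half_self (by linarith : (0 : ℝ) < 2 * C)]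
  have hexpA : exp A = (2 * C) ^ 2 * exp b := by
    have hlog_sq : log ((2 * C) ^ 2) = 2 * log (2 * C) := by simp [log_pow]
    rw [hA, exp_add, ← hlog_sq, exp_log (by positivity)]
  rw [log_le_iff_le_exp (by linarith), hexpA]
  calc 2 * (C * b + 2 * C * log A) ≤ 2 * C * b + 2 * C * A := by nlinarith
    _ ≤ 4 * C * (C + C * b) := by nlinarith [mul_le_mul_of_nonneg_left hb (by linarith : 0 ≤ C)]
    _ ≤ (2 * C) ^ 2 * exp b := by nlinarith [add_one_le_exp b]

/-- If `C ≥ 2`, `b ≥ 1`, and `n ≥ C·b + 2·C·log(2·log 2C + b)`, then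
`(2·log log 2n + b)/n ≤ 1/C`. -/
theorem loglog_div_le {C b n : ℝ} (hC : 2 ≤ C) (hb : 1 ≤ b)
    (hn : C * b + 2 * C * Real.log (2 * Real.log (2 * C) + b) ≤ n) :
    (2 * Real.log (Real.log (2 * n)) + b) / n ≤ 1 / C := by
  set n₀ := loglogThreshold C b
  have hn₀n : n₀ ≤ n := hn
  have hn₀eq : n₀ = C * b + 2 * C * log (2 * log (2 * C) + b) := rfl
  have hn₀C : 2 * C ≤ n₀ := two_mul_le_loglogThreshold (by linarith) hb
  have hlog2n₀ : 1 ≤ log (2 * n₀) := by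
    rw [le_log_iff_exp_le (by linarith)]
    linarith [exp_one_lt_d9]
  have hdecrease : 4 * C * log (log (2 * n)) - 2 * n ≤ 4 * C * log (log (2 * n₀)) - 2 * n₀ :=
    mul_log_log_sub_le_of_le (by linarith) (by linarith) (by linarith) (by nlinarith)
  have hstart : log (log (2 * n₀)) ≤ log (2 * log (2 * C) + b) :=
    log_le_log (by linarith) (log_two_mul_loglogThreshold_le (by linarith) hb)
  rw [div_le_div_iff₀ (by linarith) (by linarith)]
  linarith [mul_le_mul_of_nonneg_left hstart (by linarith : (0 : ℝ) ≤ 4 * C)]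
end Paper
end
end

section
/- Let b ≥ 1 be a constant, let f(x) = (2·log log 2x + b)/x for x ≥ 2, let 8 ≤ A < B be integers, and let r ≥ 0 be a real number. Then Σ_{n=A+1}^{B} f(n)^r is at most: (1/(1−r))·B^{1−r}·(2 log log 2B + b)^r if 0 ≤ r < 1; (log B)·(2 log log 2B + b) if r = 1; ((2r−1)/(r−1)²)·(2 log log 2A + b)^r / A^{r−1} if 1 < r ≤ 2; and (2/(r−1))·(2 log log 2A + b)^r / A^{r−1} if r > 2. -/
set_option autoImplicit false

open MeasureTheory ProbabilityTheory Matrix Finset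
open scoped Classical ENNReal

noncomputable section

namespace Paper

set_option maxHeartbeats 1000000



def gg (b x : ℝ) : ℝ := 2 * Real.log (Real.log (2 * x)) + b

lemma log16 : ((2772/1000) : ℝ) ≤ Real.log 16 := by
  have h : (16:ℝ) = 2 ^ (4:ℕ) := by norm_num
  rw [h, Real.log_pow]
  have := Real.log_two_gt_d9
  push_cast
  nlinarith

lemma log_base {x : ℝ} (hx : 8 ≤ x) : ((2772/1000):ℝ) ≤ Real.log (2 * x) :=
  le_trans log16 (Real.log_le_log (by norm_num) (by linarith))

lemma loglog_ge {x : ℝ} (hx : 8 ≤ x) : (1:ℝ) ≤ Real.log (Real.log (2 * x)) := by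
  rw [Real.le_log_iff_exp_le (by linarith [log_base hx])]
  have := Real.exp_one_lt_d9
  linarith [log_base hx]

lemma gg_ge {b x : ℝ} (hb : 1 ≤ b) (hx : 8 ≤ x) : (3:ℝ) ≤ gg b x := by
  have := loglog_ge hx; unfold gg; linarith

lemma gg_pos {b x : ℝ} (hb : 1 ≤ b) (hx : 8 ≤ x) : (0:ℝ) < gg b x := by
  linarith [gg_ge hb hx]

lemma gg_mono {b x y : ℝ} (hx : 8 ≤ x) (hxy : x ≤ y) : gg b x ≤ gg b y := by
  unfold gg
  have h1 : Real.log (2*x) ≤ Real.log (2*y) := Real.log_le_log (by linarith) (by linarith)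
  have h2 : Real.log (Real.log (2*x)) ≤ Real.log (Real.log (2*y)) :=
    Real.log_le_log (by linarith [log_base hx]) h1
  linarith

/-- key gap bound -/
lemma gg_le {b x y : ℝ} (hb : 1 ≤ b) (hx : 8 ≤ x) (hxy : x ≤ y) :
    gg b y ≤ gg b x * (1 + (Real.log y - Real.log x) / 4) := by
  have hx0 : (0:ℝ) < x := by linarith
  have hy0 : (0:ℝ) < y := by linarith
  have hu : ((2772/1000):ℝ) ≤ Real.log (2 * x) := log_base hx
  have hv : Real.log (2 * x) ≤ Real.log (2 * y) := Real.log_le_log (by linarith) (by linarith)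
  have hL : 0 ≤ Real.log y - Real.log x := by
    have := Real.log_le_log hx0 hxy; linarith
  have h1 : Real.log (Real.log (2*y)) - Real.log (Real.log (2*x))
      ≤ (Real.log y - Real.log x) / Real.log (2 * x) := by
    have hq : Real.log (Real.log (2*y)) - Real.log (Real.log (2*x))
        = Real.log (Real.log (2*y) / Real.log (2*x)) := by
      rw [Real.log_div (by linarith) (by linarith)]
    rw [hq]
    have h2 : Real.log (Real.log (2*y) / Real.log (2*x)) ≤ Real.log (2*y) / Real.log (2*x) - 1 :=
      Real.log_le_sub_one_of_pos (div_pos (by linarith) (by linarith))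
    have h3 : Real.log (2*y) / Real.log (2*x) - 1
        = (Real.log (2*y) - Real.log (2*x)) / Real.log (2*x) := by field_simp
    have h4 : Real.log (2*y) - Real.log (2*x) = Real.log y - Real.log x := by
      rw [Real.log_mul (by norm_num) hy0.ne', Real.log_mul (by norm_num) hx0.ne']; ring
    rw [h3, h4] at h2
    exact h2
  have h5 : (Real.log y - Real.log x) / Real.log (2 * x)
      ≤ (Real.log y - Real.log x) / (2772/1000) :=
    div_le_div_of_nonneg_left hL (by norm_num) hu
  have h3 := gg_ge hb hx
  unfold gg at *
  nlinarith [mul_le_mul_of_nonneg_right h3 hL]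

/-- quotient is antitone -/
lemma quot_le {b x y : ℝ} (hb : 1 ≤ b) (hx : 8 ≤ x) (hxy : x ≤ y) :
    gg b y / y ≤ gg b x / x := by
  have hx0 : (0:ℝ) < x := by linarith
  have hy0 : (0:ℝ) < y := by linarith
  have hL : 0 ≤ Real.log y - Real.log x := by
    have := Real.log_le_log hx0 hxy; linarith
  have h1 : gg b y ≤ gg b x * (y / x) := by
    have h2 := gg_le hb hx hxy
    have h3 : 1 + (Real.log y - Real.log x) / 4 ≤ y / x := by
      have he : Real.exp (Real.log y - Real.log x) = y / x := by
        rw [Real.exp_sub, Real.exp_log hx0, Real.exp_log hy0]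
      have := Real.add_one_le_exp (Real.log y - Real.log x)
      rw [he] at this
      linarith
    have := mul_le_mul_of_nonneg_left h3 (le_of_lt (gg_pos hb hx))
    linarith [gg_le hb hx hxy]
  have h4 : gg b y / y ≤ gg b x * (y / x) / y := by gcongr
  calc gg b y / y ≤ gg b x * (y / x) / y := h4
    _ = gg b x / x := by field_simp





/-- (n/A)^{1/4} style bound -/
lemma gg_quarter {b x y : ℝ} (hb : 1 ≤ b) (hx : 8 ≤ x) (hxy : x ≤ y) :
    gg b y ≤ gg b x * (y ^ ((1:ℝ)/4) * x ^ (-((1:ℝ)/4))) := by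
  have hx0 : (0:ℝ) < x := by linarith
  have hy0 : (0:ℝ) < y := by linarith
  have hL : 0 ≤ Real.log y - Real.log x := by
    have := Real.log_le_log hx0 hxy; linarith
  have he : y ^ ((1:ℝ)/4) * x ^ (-((1:ℝ)/4)) = Real.exp ((Real.log y - Real.log x)/4) := by
    rw [Real.rpow_def_of_pos hy0, Real.rpow_def_of_pos hx0, ← Real.exp_add]
    ring_nf
  have h2 : 1 + (Real.log y - Real.log x) / 4 ≤ Real.exp ((Real.log y - Real.log x)/4) := by
    have := Real.add_one_le_exp ((Real.log y - Real.log x)/4)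
    linarith
  have h3 := gg_le hb hx hxy
  have h4 := mul_le_mul_of_nonneg_left h2 (le_of_lt (gg_pos hb hx))
  rw [he]
  linarith

/-- Bernoulli upper bound, exponent in [0,1] -/
lemma bern {s t : ℝ} (h0 : 0 ≤ s) (h1 : s ≤ 1) (ht : 0 ≤ t) :
    (1+t) ^ s ≤ 1 + s * t := by
  have := Real.geom_mean_le_arith_mean2_weighted h0 (by linarith : (0:ℝ) ≤ 1 - s)
    (by linarith : (0:ℝ) ≤ 1+t) zero_le_one (by ring)
  rw [Real.one_rpow, mul_one] at this
  nlinarith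

lemma pow_one_plus {r t : ℝ} (h1 : 1 ≤ r) (h2 : r ≤ 2) (ht : 0 ≤ t) :
    (1+t) ^ r ≤ 1 + r * t + (r-1) * t^2 := by
  have h0 : (0:ℝ) < 1 + t := by linarith
  have e : (1+t) ^ r = (1+t) ^ (r-1) * (1+t) := by
    have h := Real.rpow_add h0 (r-1) 1
    rw [Real.rpow_one] at h
    rw [show r = r - 1 + 1 by ring, h]; ring_nf
  rw [e]
  have hb := bern (s := r - 1) (by linarith) (by linarith) ht
  nlinarith [mul_le_mul_of_nonneg_right hb (le_of_lt h0), Real.rpow_nonneg (le_of_lt h0) (r-1)]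

/-- sum vs integral -/
lemma sum_le_int (f : ℝ → ℝ) (A B : ℕ) (hAB : A ≤ B) (hf : AntitoneOn f (Set.Icc (A:ℝ) B)) :
    ∑ n ∈ Finset.Icc (A+1) B, f n ≤ ∫ x in (A:ℝ)..(B:ℝ), f x := by
  have h := AntitoneOn.sum_le_integral_Ico hAB hf
  have e : ∑ n ∈ Finset.Icc (A+1) B, f n = ∑ i ∈ Finset.Ico A B, f ((i:ℕ) + 1 : ℕ) := by
    rw [← Finset.Ico_add_one_right_eq_Icc, ← Finset.sum_Ico_add']
  rw [e]; exact h





lemma ftc_main (r p q s c : ℝ) (A B : ℝ) (hA : 0 < A) (hAB : A ≤ B) :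
    ∫ x in A..B, (x ^ (-r) * (((r-1)*p - q) + ((r-1)*q - 2*s)*(Real.log x - c)
      + (r-1)*s*(Real.log x - c)^2)) =
    (-(B * B ^ (-r)) * (p + q*(Real.log B - c) + s*(Real.log B - c)^2))
      - (-(A * A ^ (-r)) * (p + q*(Real.log A - c) + s*(Real.log A - c)^2)) := by
  have hsub : Set.uIcc A B ⊆ Set.Ioi (0:ℝ) := by
    rw [Set.uIcc_of_le hAB]
    intro x hx
    exact lt_of_lt_of_le hA hx.1
  apply intervalIntegral.integral_eq_sub_of_hasDerivAt
  · intro x hx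
    have hx0 : (0:ℝ) < x := hsub hx
    have h1 : HasDerivAt (fun y : ℝ => y ^ (-r)) (-r * x ^ (-r-1)) x :=
      Real.hasDerivAt_rpow_const (Or.inl hx0.ne')
    have h2 : HasDerivAt (fun y : ℝ => y * y ^ (-r))
        (1 * x ^ (-r) + x * (-r * x ^ (-r-1))) x := (hasDerivAt_id x).mul h1
    have h3 : HasDerivAt (fun y : ℝ => Real.log y - c) x⁻¹ x :=
      (Real.hasDerivAt_log hx0.ne').sub_const c
    have h4 := h3.pow 2
    have hQ : HasDerivAt (fun y : ℝ => p + q*(Real.log y - c) + s*(Real.log y - c)^2)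
        (q * x⁻¹ + s * ((2:ℕ) * (Real.log x - c) ^ (2-1) * x⁻¹)) x :=
      ((h3.const_mul q).const_add p).add (h4.const_mul s)
    have hF := (h2.neg).mul hQ
    convert hF using 1
    · rfl
    · rfl
    have hxr : x ^ (-r-1) = x ^ (-r) / x := by
      rw [show (-r-1 : ℝ) = -r - 1 from rfl, Real.rpow_sub_one hx0.ne']
    rw [hxr]
    simp only [Pi.neg_apply]
    push_cast
    field_simp
    ring
  · have c1 : ContinuousOn (fun x:ℝ => x ^ (-r)) (Set.uIcc A B) := fun x hx =>
      (Real.continuousAt_rpow_const x (-r) (Or.inl (ne_of_gt (hsub hx)))).continuousWithinAt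
    have c2 : ContinuousOn (fun x:ℝ => Real.log x - c) (Set.uIcc A B) := fun x hx =>
      ((Real.continuousAt_log (ne_of_gt (hsub hx))).sub continuousAt_const).continuousWithinAt
    exact (c1.mul ((continuousOn_const.add (continuousOn_const.mul c2)).add
      (continuousOn_const.mul (c2.pow 2)))).intervalIntegrable




/-- Bounds on `∑_{n=A+1}^{B} f(n)^r` for `f(x) = (2 log log 2x + b)/x`, with cases according to
the value of `r ≥ 0`. -/
theorem sum_loglog_pow_le (b : ℝ) (hb : 1 ≤ b) (A B : ℕ) (hA : 8 ≤ A) (hAB : A < B)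
    (r : ℝ) (hr : 0 ≤ r) :
    (r < 1 →
      ∑ n ∈ Finset.Icc (A + 1) B, ((2 * Real.log (Real.log (2 * n)) + b) / n) ^ r ≤
        1 / (1 - r) * (B : ℝ) ^ (1 - r) * (2 * Real.log (Real.log (2 * B)) + b) ^ r) ∧
    (r = 1 →
      ∑ n ∈ Finset.Icc (A + 1) B, ((2 * Real.log (Real.log (2 * n)) + b) / n) ^ r ≤
        Real.log B * (2 * Real.log (Real.log (2 * B)) + b)) ∧
    (1 < r → r ≤ 2 →
      ∑ n ∈ Finset.Icc (A + 1) B, ((2 * Real.log (Real.log (2 * n)) + b) / n) ^ r ≤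
        (2 * r - 1) / (r - 1) ^ 2 *
          ((2 * Real.log (Real.log (2 * A)) + b) ^ r / (A : ℝ) ^ (r - 1))) ∧
    (2 < r →
      ∑ n ∈ Finset.Icc (A + 1) B, ((2 * Real.log (Real.log (2 * n)) + b) / n) ^ r ≤
        2 / (r - 1) * ((2 * Real.log (Real.log (2 * A)) + b) ^ r / (A : ℝ) ^ (r - 1))) := by
  have hG : ∀ x : ℝ, 2 * Real.log (Real.log (2 * x)) + b = gg b x := fun _ => rfl
  have hABn : A ≤ B := le_of_lt hAB
  have hA8 : (8:ℝ) ≤ (A:ℝ) := by exact_mod_cast hA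
  have hA0 : (0:ℝ) < A := by linarith
  have hAB' : (A:ℝ) ≤ B := by exact_mod_cast hABn
  have hB8 : (8:ℝ) ≤ (B:ℝ) := le_trans hA8 hAB'
  have hB0 : (0:ℝ) < B := by linarith
  have hgA : (0:ℝ) < gg b A := gg_pos hb hA8
  have hgB : (0:ℝ) < gg b B := gg_pos hb hB8
  have hfacts : ∀ n ∈ Finset.Icc (A+1) B, (8:ℝ) ≤ (n:ℝ) ∧ (A:ℝ) ≤ (n:ℝ) ∧ (n:ℝ) ≤ B := by
    intro n hn
    obtain ⟨h1, h2⟩ := Finset.mem_Icc.1 hn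
    have hAn : (A:ℝ) + 1 ≤ n := by exact_mod_cast h1
    refine ⟨by linarith, by linarith, by exact_mod_cast h2⟩
  simp only [hG]
  refine ⟨?_, ?_, ?_, ?_⟩
  -- CASE r < 1
  · intro hr1
    have hgBr : (0:ℝ) ≤ gg b B ^ r := Real.rpow_nonneg hgB.le r
    have step1 : ∑ n ∈ Finset.Icc (A+1) B, (gg b n / n) ^ r
        ≤ ∑ n ∈ Finset.Icc (A+1) B, gg b B ^ r * (n:ℝ) ^ (-r) := by
      apply Finset.sum_le_sum
      intro n hn
      obtain ⟨hn8, hnA, hnB⟩ := hfacts n hn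
      have hn0 : (0:ℝ) < n := by linarith
      have h1 : gg b n / n ≤ gg b B / n := by
        gcongr
        exact gg_mono hn8 hnB
      calc (gg b n / n) ^ r ≤ (gg b B / n) ^ r :=
            Real.rpow_le_rpow (div_nonneg (gg_pos hb hn8).le hn0.le) h1 hr
        _ = gg b B ^ r * (n:ℝ) ^ (-r) := by
            rw [Real.div_rpow hgB.le hn0.le, Real.rpow_neg hn0.le, div_eq_mul_inv]
    have hanti : AntitoneOn (fun x : ℝ => x ^ (-r)) (Set.Icc (A:ℝ) B) := by
      apply (Real.antitoneOn_rpow_Ioi_of_exponent_nonpos (neg_nonpos.mpr hr)).mono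
      intro x hx; exact lt_of_lt_of_le hA0 hx.1
    have step2 := sum_le_int (fun x : ℝ => x ^ (-r)) A B hABn hanti
    have step3 : (∫ x in (A:ℝ)..(B:ℝ), x ^ (-r))
        = ((B:ℝ) ^ (-r+1) - (A:ℝ) ^ (-r+1))/(-r+1) := integral_rpow (Or.inl (by linarith))
    have e1 : (-r+1 : ℝ) = 1 - r := by ring
    rw [e1] at step3
    have hBp : (0:ℝ) ≤ (B:ℝ) ^ (1-r) := Real.rpow_nonneg hB0.le _
    have hAp : (0:ℝ) ≤ (A:ℝ) ^ (1-r) := Real.rpow_nonneg hA0.le _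
    have hinv : (0:ℝ) ≤ (1-r)⁻¹ := inv_nonneg.mpr (by linarith)
    calc ∑ n ∈ Finset.Icc (A+1) B, (gg b n / n) ^ r
        ≤ ∑ n ∈ Finset.Icc (A+1) B, gg b B ^ r * (n:ℝ) ^ (-r) := step1
      _ = gg b B ^ r * ∑ n ∈ Finset.Icc (A+1) B, (n:ℝ) ^ (-r) := by
          rw [Finset.mul_sum]
      _ ≤ gg b B ^ r * (((B:ℝ) ^ (1-r) - (A:ℝ) ^ (1-r))/(1-r)) := by
          rw [← step3]; exact mul_le_mul_of_nonneg_left step2 hgBr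
      _ ≤ 1/(1-r) * (B:ℝ) ^ (1-r) * gg b B ^ r := by
          rw [div_eq_mul_inv, one_div]
          nlinarith [mul_nonneg (mul_nonneg hgBr hAp) hinv]
  -- CASE r = 1
  · intro hr1
    subst hr1
    simp only [Real.rpow_one]
    have step1 : ∑ n ∈ Finset.Icc (A+1) B, gg b n / n
        ≤ ∑ n ∈ Finset.Icc (A+1) B, gg b B * (n:ℝ)⁻¹ := by
      apply Finset.sum_le_sum
      intro n hn
      obtain ⟨hn8, hnA, hnB⟩ := hfacts n hn
      have hn0 : (0:ℝ) < n := by linarith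
      rw [← div_eq_mul_inv]
      gcongr
      exact gg_mono hn8 hnB
    have hanti : AntitoneOn (fun x : ℝ => x⁻¹) (Set.Icc (A:ℝ) B) := by
      intro x hx y hy hxy
      exact inv_anti₀ (lt_of_lt_of_le hA0 hx.1) hxy
    have step2 := sum_le_int (fun x : ℝ => x⁻¹) A B hABn hanti
    have step3 : (∫ x in (A:ℝ)..(B:ℝ), x⁻¹) = Real.log ((B:ℝ)/A) :=
      integral_inv_of_pos hA0 hB0
    have hlogA : 0 ≤ Real.log (A:ℝ) := Real.log_nonneg (by linarith)
    have step4 : Real.log ((B:ℝ)/A) = Real.log B - Real.log A :=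
      Real.log_div hB0.ne' hA0.ne'
    calc ∑ n ∈ Finset.Icc (A+1) B, gg b n / n
        ≤ ∑ n ∈ Finset.Icc (A+1) B, gg b B * (n:ℝ)⁻¹ := step1
      _ = gg b B * ∑ n ∈ Finset.Icc (A+1) B, (n:ℝ)⁻¹ := by rw [Finset.mul_sum]
      _ ≤ gg b B * (Real.log B - Real.log A) := by
          rw [← step4, ← step3]; exact mul_le_mul_of_nonneg_left step2 hgB.le
      _ ≤ Real.log B * gg b B := by nlinarith
  -- CASE 1 < r ≤ 2
  · intro hr1 hr2
    have hr1' : (0:ℝ) < r - 1 := by linarith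
    have hgAr : (0:ℝ) ≤ gg b A ^ r := Real.rpow_nonneg hgA.le r
    set G : ℝ := gg b A ^ r with hGdef
    set q0 : ℝ := (r/4 + 1/8)/(r-1) with hq0
    set p0 : ℝ := (1 + q0)/(r-1) with hp0
    have hq0nn : 0 ≤ q0 := div_nonneg (by linarith) hr1'.le
    have hp0nn : 0 ≤ p0 := div_nonneg (by linarith) hr1'.le
    set c : ℝ := Real.log (A:ℝ) with hc
    have id1 : (r-1)*(G*p0) - G*q0 = G * 1 := by
      rw [hp0]; field_simp; ring
    have id2 : (r-1)*(G*q0) - 2*(G*(1/16)) = G * (r/4) := by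
      rw [hq0]; field_simp; ring
    have id3 : (r-1)*(G*(1/16)) = G * ((r-1)/16) := by ring
    have hanti : AntitoneOn (fun x : ℝ => (gg b x / x) ^ r) (Set.Icc (A:ℝ) B) := by
      intro x hx y hy hxy
      have hx8 : (8:ℝ) ≤ x := le_trans hA8 hx.1
      have hy8 : (8:ℝ) ≤ y := le_trans hx8 hxy
      exact Real.rpow_le_rpow (div_nonneg (gg_pos hb hy8).le (by linarith))
        (quot_le hb hx8 hxy) hr
    have step1 := sum_le_int (fun x : ℝ => (gg b x / x) ^ r) A B hABn hanti
    set ψ : ℝ → ℝ := fun x => x ^ (-r) * (((r-1)*(G*p0) - G*q0)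
      + ((r-1)*(G*q0) - 2*(G*(1/16)))*(Real.log x - c)
      + (r-1)*(G*(1/16))*(Real.log x - c)^2) with hψ
    have hpt : ∀ x ∈ Set.Icc (A:ℝ) (B:ℝ), (gg b x / x) ^ r ≤ ψ x := by
      intro x hx
      have hx8 : (8:ℝ) ≤ x := le_trans hA8 hx.1
      have hx0 : (0:ℝ) < x := by linarith
      have hL : 0 ≤ Real.log x - c := by
        rw [hc]; have := Real.log_le_log hA0 hx.1; linarith
      have h1 : gg b x ≤ gg b A * (1 + (Real.log x - c)/4) := by
        rw [hc]; exact gg_le hb hA8 hx.1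
      have h1' : (0:ℝ) ≤ 1 + (Real.log x - c)/4 := by linarith
      have h2 : gg b x / x ≤ (gg b A * (1 + (Real.log x - c)/4)) / x := by
        gcongr
      have h3 : (gg b x / x) ^ r ≤ ((gg b A * (1 + (Real.log x - c)/4)) / x) ^ r :=
        Real.rpow_le_rpow (div_nonneg (gg_pos hb hx8).le hx0.le) h2 hr
      have h4 : ((gg b A * (1 + (Real.log x - c)/4)) / x) ^ r
          = G * (1 + (Real.log x - c)/4) ^ r * x ^ (-r) := by
        rw [Real.div_rpow (mul_nonneg hgA.le h1') hx0.le,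
          Real.mul_rpow hgA.le h1', Real.rpow_neg hx0.le, hGdef]; ring
      have h5 : (1 + (Real.log x - c)/4) ^ r
          ≤ 1 + r*((Real.log x - c)/4) + (r-1)*((Real.log x - c)/4)^2 :=
        pow_one_plus hr1.le hr2 (by linarith)
      have hxr : (0:ℝ) ≤ x ^ (-r) := Real.rpow_nonneg hx0.le _
      calc (gg b x / x) ^ r ≤ G * (1 + (Real.log x - c)/4) ^ r * x ^ (-r) := by
            rw [← h4]; exact h3
        _ ≤ G * (1 + r*((Real.log x - c)/4) + (r-1)*((Real.log x - c)/4)^2) * x ^ (-r) :=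
            mul_le_mul_of_nonneg_right (mul_le_mul_of_nonneg_left h5 hgAr) hxr
        _ = ψ x := by
            rw [hψ]; simp only []; rw [id1, id2, id3]; ring
    have hint1 : IntervalIntegrable (fun x : ℝ => (gg b x / x) ^ r)
        MeasureTheory.volume (A:ℝ) (B:ℝ) := by
      apply AntitoneOn.intervalIntegrable; rwa [Set.uIcc_of_le hAB']
    have hsub : Set.uIcc (A:ℝ) (B:ℝ) ⊆ Set.Ioi (0:ℝ) := by
      rw [Set.uIcc_of_le hAB']; intro x hx; exact lt_of_lt_of_le hA0 hx.1
    have hint2 : IntervalIntegrable ψ MeasureTheory.volume (A:ℝ) (B:ℝ) := by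
      have c1 : ContinuousOn (fun x:ℝ => x ^ (-r)) (Set.uIcc (A:ℝ) (B:ℝ)) := fun x hx =>
        (Real.continuousAt_rpow_const x (-r) (Or.inl (ne_of_gt (hsub hx)))).continuousWithinAt
      have c2 : ContinuousOn (fun x:ℝ => Real.log x - c) (Set.uIcc (A:ℝ) (B:ℝ)) := fun x hx =>
        ((Real.continuousAt_log (ne_of_gt (hsub hx))).sub continuousAt_const).continuousWithinAt
      exact (c1.mul ((continuousOn_const.add (continuousOn_const.mul c2)).add
        (continuousOn_const.mul (c2.pow 2)))).intervalIntegrable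
    have step2 : (∫ x in (A:ℝ)..(B:ℝ), (gg b x / x) ^ r) ≤ ∫ x in (A:ℝ)..(B:ℝ), ψ x :=
      intervalIntegral.integral_mono_on hAB' hint1 hint2 hpt
    have step3 := ftc_main r (G*p0) (G*q0) (G*(1/16)) c (A:ℝ) (B:ℝ) hA0 hAB'
    have hLB : 0 ≤ Real.log (B:ℝ) - c := by
      rw [hc]; have := Real.log_le_log hA0 hAB'; linarith
    have hBB : (0:ℝ) ≤ (B:ℝ) * (B:ℝ) ^ (-r) := mul_nonneg hB0.le (Real.rpow_nonneg hB0.le _)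
    have hQB : (0:ℝ) ≤ (G*p0) + (G*q0)*(Real.log (B:ℝ) - c) + (G*(1/16))*(Real.log (B:ℝ) - c)^2 := by
      have t1 : 0 ≤ G*p0 := mul_nonneg hgAr hp0nn
      have t2 : 0 ≤ (G*q0)*(Real.log (B:ℝ) - c) := mul_nonneg (mul_nonneg hgAr hq0nn) hLB
      have t3 : 0 ≤ (G*(1/16))*(Real.log (B:ℝ) - c)^2 :=
        mul_nonneg (by nlinarith) (sq_nonneg _)
      linarith
    have hLA : Real.log (A:ℝ) - c = 0 := by rw [hc]; ring
    have step4 : (∫ x in (A:ℝ)..(B:ℝ), ψ x) ≤ (A:ℝ) * (A:ℝ) ^ (-r) * (G*p0) := by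
      rw [hψ]
      rw [step3, hLA]
      nlinarith [mul_nonneg hBB hQB]
    have hAAr : (A:ℝ) * (A:ℝ) ^ (-r) = (((A:ℝ)) ^ (r-1))⁻¹ := by
      have e1 : (A:ℝ) * (A:ℝ) ^ (-r) = (A:ℝ) ^ (1 + -r) := by
        rw [Real.rpow_add hA0, Real.rpow_one]
      rw [e1, show (1 + -r : ℝ) = -(r-1) by ring, Real.rpow_neg hA0.le]
    have hp0le : p0 ≤ (2*r-1)/(r-1)^2 := by
      have hp0eq : p0 = (r - 1 + r/4 + 1/8)/(r-1)^2 := by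
        rw [hp0, hq0]; field_simp; ring
      rw [hp0eq, div_le_div_iff₀ (by positivity) (by positivity)]
      nlinarith
    have hWW : (0:ℝ) ≤ G * (((A:ℝ)) ^ (r-1))⁻¹ :=
      mul_nonneg hgAr (inv_nonneg.mpr (Real.rpow_nonneg hA0.le _))
    calc ∑ n ∈ Finset.Icc (A+1) B, (gg b n / n) ^ r
        ≤ ∫ x in (A:ℝ)..(B:ℝ), (gg b x / x) ^ r := step1
      _ ≤ ∫ x in (A:ℝ)..(B:ℝ), ψ x := step2
      _ ≤ (A:ℝ) * (A:ℝ) ^ (-r) * (G*p0) := step4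
      _ ≤ (2*r-1)/(r-1)^2 * (G / (A:ℝ) ^ (r-1)) := by
          rw [hAAr, div_eq_mul_inv G]
          nlinarith [mul_le_mul_of_nonneg_left hp0le hWW]
  -- CASE r > 2
  · intro hr2
    have hd : (0:ℝ) < 3*r - 4 := by linarith
    have hgAr : (0:ℝ) ≤ gg b A ^ r := Real.rpow_nonneg hgA.le r
    set e : ℝ := ((1:ℝ)/4 - 1) * r with he
    have hee : e = -(3/4)*r := by rw [he]; ring
    have he1 : e + 1 < 0 := by rw [hee]; linarith
    set C : ℝ := gg b A ^ r * (A:ℝ) ^ (-((1:ℝ)/4)*r) with hC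
    have hCnn : 0 ≤ C := mul_nonneg hgAr (Real.rpow_nonneg hA0.le _)
    have step1 : ∑ n ∈ Finset.Icc (A+1) B, (gg b n / n) ^ r
        ≤ ∑ n ∈ Finset.Icc (A+1) B, C * (n:ℝ) ^ e := by
      apply Finset.sum_le_sum
      intro n hn
      obtain ⟨hn8, hnA, hnB⟩ := hfacts n hn
      have hn0 : (0:ℝ) < n := by linarith
      have hu : (0:ℝ) ≤ gg b A * (A:ℝ) ^ (-((1:ℝ)/4)) :=
        mul_nonneg hgA.le (Real.rpow_nonneg hA0.le _)
      have h1 : gg b n / n ≤ (gg b A * (A:ℝ) ^ (-((1:ℝ)/4))) * (n:ℝ) ^ ((1:ℝ)/4 - 1) := by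
        have h2 : gg b n / n ≤ gg b A * ((n:ℝ) ^ ((1:ℝ)/4) * (A:ℝ) ^ (-((1:ℝ)/4))) / n := by
          gcongr
          exact gg_quarter hb hA8 hnA
        have h3 : gg b A * ((n:ℝ) ^ ((1:ℝ)/4) * (A:ℝ) ^ (-((1:ℝ)/4))) / n
            = (gg b A * (A:ℝ) ^ (-((1:ℝ)/4))) * (n:ℝ) ^ ((1:ℝ)/4 - 1) := by
          rw [Real.rpow_sub_one hn0.ne']; ring
        linarith
      calc (gg b n / n) ^ r
          ≤ ((gg b A * (A:ℝ) ^ (-((1:ℝ)/4))) * (n:ℝ) ^ ((1:ℝ)/4 - 1)) ^ r :=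
            Real.rpow_le_rpow (div_nonneg (gg_pos hb hn8).le hn0.le) h1 hr
        _ = C * (n:ℝ) ^ e := by
            rw [Real.mul_rpow hu (Real.rpow_nonneg hn0.le _),
              Real.mul_rpow hgA.le (Real.rpow_nonneg hA0.le _),
              ← Real.rpow_mul hn0.le, ← Real.rpow_mul hA0.le, hC, he]
    have hanti : AntitoneOn (fun x : ℝ => x ^ e) (Set.Icc (A:ℝ) B) := by
      apply (Real.antitoneOn_rpow_Ioi_of_exponent_nonpos (by nlinarith)).mono
      intro x hx; exact lt_of_lt_of_le hA0 hx.1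
    have step2 := sum_le_int (fun x : ℝ => x ^ e) A B hABn hanti
    have step3 : (∫ x in (A:ℝ)..(B:ℝ), x ^ e)
        = ((B:ℝ) ^ (e+1) - (A:ℝ) ^ (e+1))/(e+1) :=
      integral_rpow (Or.inr ⟨by linarith, Set.notMem_uIcc_of_lt hA0 hB0⟩)
    have hBp : (0:ℝ) ≤ (B:ℝ) ^ (e+1) := Real.rpow_nonneg hB0.le _
    have h4 : (4:ℝ)/(3*r-4) * (e+1) = -1 := by
      rw [hee]; field_simp; ring
    have step4 : ((B:ℝ) ^ (e+1) - (A:ℝ) ^ (e+1))/(e+1)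
        ≤ (A:ℝ) ^ (e+1) * (4/(3*r-4)) := by
      rw [div_le_iff_of_neg he1, mul_assoc, h4]
      linarith
    have hAr : (A:ℝ) ^ ((1:ℝ)-r) = ((A:ℝ) ^ (r-1))⁻¹ := by
      rw [show ((1:ℝ)-r) = -(r-1) by ring, Real.rpow_neg hA0.le]
    have hcomp : (4:ℝ)/(3*r-4) ≤ 2/(r-1) := by
      rw [div_le_div_iff₀ hd (by linarith)]; linarith
    have hW : (0:ℝ) ≤ gg b A ^ r * ((A:ℝ) ^ (r-1))⁻¹ :=
      mul_nonneg hgAr (inv_nonneg.mpr (Real.rpow_nonneg hA0.le _))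
    calc ∑ n ∈ Finset.Icc (A+1) B, (gg b n / n) ^ r
        ≤ ∑ n ∈ Finset.Icc (A+1) B, C * (n:ℝ) ^ e := step1
      _ = C * ∑ n ∈ Finset.Icc (A+1) B, (n:ℝ) ^ e := by rw [Finset.mul_sum]
      _ ≤ C * (((B:ℝ) ^ (e+1) - (A:ℝ) ^ (e+1))/(e+1)) := by
          rw [← step3]; exact mul_le_mul_of_nonneg_left step2 hCnn
      _ ≤ C * ((A:ℝ) ^ (e+1) * (4/(3*r-4))) := mul_le_mul_of_nonneg_left step4 hCnn
      _ = gg b A ^ r * (A:ℝ) ^ ((1:ℝ)-r) * (4/(3*r-4)) := by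
          rw [hC]
          have h5 : (A:ℝ) ^ (-((1:ℝ)/4)*r) * (A:ℝ) ^ (e+1) = (A:ℝ) ^ ((1:ℝ)-r) := by
            rw [← Real.rpow_add hA0]; congr 1; rw [he]; ring
          calc gg b A ^ r * (A:ℝ) ^ (-((1:ℝ)/4)*r) * ((A:ℝ) ^ (e+1) * (4/(3*r-4)))
              = gg b A ^ r * ((A:ℝ) ^ (-((1:ℝ)/4)*r) * (A:ℝ) ^ (e+1)) * (4/(3*r-4)) := by ring
            _ = gg b A ^ r * (A:ℝ) ^ ((1:ℝ)-r) * (4/(3*r-4)) := by rw [h5]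
      _ ≤ 2/(r-1) * (gg b A ^ r / (A:ℝ) ^ (r-1)) := by
          rw [hAr, div_eq_mul_inv (gg b A ^ r)]
          nlinarith [mul_le_mul_of_nonneg_left hcomp hW]



end Paper
end
end

section
/- (Time-uniform Freedman inequality.) Let (X_t)_{t≥1} be a real-valued martingale difference sequence adapted to a filtration (F_t)_{t≥0}, and suppose there is R > 0 such that |X_t| ≤ R almost surely for all t ≥ 1. Then for any η ∈ (0, 1/R] and any δ ∈ (0,1], P( there exists n ∈ ℕ with Σ_{t=1}^n X_t ≥ η·Σ_{t=1}^n E[X_t² | F_{t−1}] + (1/η)·log(1/δ) ) ≤ δ. -/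
set_option autoImplicit false

open MeasureTheory ProbabilityTheory Matrix Finset
open scoped Classical ENNReal

noncomputable section

namespace Paper

lemma exp_le_one_add_add_sq {x : ℝ} (hx : |x| ≤ 1) : Real.exp x ≤ 1 + x + x ^ 2 := by
  have h := Real.exp_bound hx (n := 3) (by norm_num)
  have hsum : ∑ m ∈ Finset.range 3, x ^ m / m.factorial = 1 + x + x ^ 2 / 2 := by
    norm_num [Finset.sum_range_succ, Nat.factorial]
  rw [hsum] at h
  have h1 : Real.exp x - (1 + x + x ^ 2 / 2) ≤ |x| ^ 3 * (4 / (6 * 3)) := by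
    have := abs_le.1 h
    simpa [Nat.factorial] using this.2
  have h2 : |x| ^ 3 ≤ x ^ 2 := by
    have : |x| ^ 3 ≤ |x| ^ 2 := pow_le_pow_of_le_one (abs_nonneg x) hx (by norm_num)
    simpa [sq_abs] using this
  nlinarith [sq_nonneg x]

lemma integrable_of_ae_bound {Ω : Type*} {m0 : MeasurableSpace Ω} {P : Measure Ω}
    [IsFiniteMeasure P] {f : Ω → ℝ} (hm : AEStronglyMeasurable f P) {c : ℝ}
    (h : ∀ᵐ ω ∂P, ‖f ω‖ ≤ c) : Integrable f P :=
  ⟨hm, HasFiniteIntegral.of_bounded h⟩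

/-- **Ville's inequality** for nonnegative supermartingales indexed by `ℕ`. -/
lemma ville_aux {Ω : Type*} {m0 : MeasurableSpace Ω} {P : Measure Ω}
    [IsProbabilityMeasure P] {F : Filtration ℕ m0} {g : ℕ → Ω → ℝ}
    (hg : Supermartingale g F P) (hpos : ∀ n ω, 0 ≤ g n ω) {c : ℝ} (hc : 0 < c) :
    P {ω | ∃ n, c ≤ g n ω} ≤ ENNReal.ofReal ((∫ ω, g 0 ω ∂P) / c) := by
  set I := ∫ ω, g 0 ω ∂P with hI
  have hmeasg : ∀ k, Measurable (g k) :=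
    fun k => (hg.stronglyMeasurable k).measurable.le (F.le k)
  set A : ℕ → Set Ω := fun N => {ω | ∃ k, k ≤ N ∧ c ≤ g k ω} with hA
  have hAmeas : ∀ N, MeasurableSet (A N) := by
    intro N
    have : A N = ⋃ k ∈ Set.Iic N, {ω | c ≤ g k ω} := by
      ext ω; simp [hA]
    rw [this]
    exact MeasurableSet.biUnion (Set.to_countable _)
      fun k _ => measurableSet_le measurable_const (hmeasg k)
  have hmono : Monotone A := by
    intro M N hMN ω ⟨k, hk, hgk⟩
    exact ⟨k, hk.trans hMN, hgk⟩
  have hset : {ω | ∃ n, c ≤ g n ω} = ⋃ N, A N := by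
    ext ω
    constructor
    · rintro ⟨n, hn⟩; exact Set.mem_iUnion.2 ⟨n, n, le_rfl, hn⟩
    · rintro h; obtain ⟨N, k, _, hk⟩ := Set.mem_iUnion.1 h; exact ⟨k, hk⟩
  rw [hset, (hmono.directed_le).measure_iUnion]
  refine iSup_le fun N => ?_
  set τ : Ω → ℕ∞ := fun ω => ((hittingBtwn g (Set.Ici c) 0 N ω : ℕ) : ℕ∞) with hτdef
  have hτ : IsStoppingTime F τ := Adapted.isStoppingTime_hittingBtwn hg.stronglyAdapted.adapted measurableSet_Ici
  have hτle : ∀ ω, τ ω ≤ N := fun ω => by simp only [hτdef, Nat.cast_le]; exact hittingBtwn_le ω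
  have hsv_int : Integrable (stoppedValue g τ) P :=
    integrable_stoppedValue ℕ hτ hg.integrable hτle
  have hsv_nonneg : ∀ ω, 0 ≤ stoppedValue g τ ω := fun ω => hpos _ ω
  have hsv_le : ∫ ω, stoppedValue g τ ω ∂P ≤ I := by
    have h0 : IsStoppingTime F (fun _ => ((0 : ℕ) : ℕ∞)) := isStoppingTime_const F 0
    have h := hg.neg.expected_stoppedValue_mono h0 hτ (fun ω => by simp) hτle
    have e0 : stoppedValue (-g) (fun _ => ((0 : ℕ) : ℕ∞)) = fun ω => -(g 0 ω) := rfl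
    have e1 : stoppedValue (-g) τ = fun ω => -(stoppedValue g τ ω) := rfl
    rw [e0, e1, integral_neg, integral_neg, neg_le_neg_iff] at h
    exact h
  have hind : ∀ ω, (A N).indicator (fun _ => c) ω ≤ stoppedValue g τ ω := by
    intro ω
    by_cases hω : ω ∈ A N
    · rw [Set.indicator_of_mem hω]
      obtain ⟨k, hk, hgk⟩ := hω
      exact stoppedValue_hittingBtwn_mem ⟨k, ⟨Nat.zero_le _, hk⟩, hgk⟩
    · rw [Set.indicator_of_notMem hω]; exact hsv_nonneg ω
  have hind_int : Integrable ((A N).indicator (fun _ => c)) P :=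
    (integrable_const c).indicator (hAmeas N)
  have key : c * (P (A N)).toReal ≤ I := by
    have := integral_mono hind_int hsv_int hind
    rw [integral_indicator_const _ (hAmeas N)] at this
    simpa [smul_eq_mul, mul_comm, measureReal_def] using this.trans hsv_le
  have hfin : P (A N) ≠ ⊤ := measure_ne_top _ _
  rw [← ENNReal.ofReal_toReal hfin]
  apply ENNReal.ofReal_le_ofReal
  rw [le_div_iff₀ hc]
  linarith [key]

/-- **Time-uniform Freedman inequality** for bounded martingale difference sequences. -/
theorem time_uniform_freedman {Ω : Type*} {m0 : MeasurableSpace Ω} (P : Measure Ω)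
    [IsProbabilityMeasure P] (F : Filtration ℕ m0) (X : ℕ → Ω → ℝ)
    (hadapted : ∀ t, 1 ≤ t → Measurable[F t] (X t))
    (hmds : ∀ t, 1 ≤ t → P[X t | F (t - 1)] =ᵐ[P] 0)
    (R : ℝ) (hR : 0 < R) (hbdd : ∀ t, 1 ≤ t → ∀ᵐ ω ∂P, |X t ω| ≤ R)
    (η : ℝ) (hη : 0 < η) (hηR : η ≤ 1 / R) (δ : ℝ) (hδ : 0 < δ) (hδ1 : δ ≤ 1) :
    P {ω | ∃ n : ℕ, 1 ≤ n ∧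
        ∑ t ∈ Finset.Icc 1 n, X t ω ≥
          η * ∑ t ∈ Finset.Icc 1 n, (P[fun ω' => X t ω' ^ 2 | F (t - 1)]) ω +
            (1 / η) * Real.log (1 / δ)} ≤
      ENNReal.ofReal δ := by
  have hηR' : η * R ≤ 1 := by
    rw [le_div_iff₀ hR] at hηR; linarith
  set C : ℕ → Ω → ℝ := fun t => P[fun ω' => X t ω' ^ 2 | F (t - 1)] with hC
  set S : ℕ → Ω → ℝ := fun n ω => ∑ t ∈ Finset.Icc 1 n, X t ω with hS
  set V : ℕ → Ω → ℝ := fun n ω => ∑ t ∈ Finset.Icc 1 n, C t ω with hV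
  set g : ℕ → Ω → ℝ := fun n ω => Real.exp (η * S n ω - η ^ 2 * V n ω) with hgdef
  -- basic measurability and integrability
  have hXmeas : ∀ t, 1 ≤ t → Measurable (X t) := fun t ht => (hadapted t ht).le (F.le t)
  have hXint : ∀ t, 1 ≤ t → Integrable (X t) P := by
    intro t ht
    refine integrable_of_ae_bound (hXmeas t ht).aestronglyMeasurable (c := R)
      ((hbdd t ht).mono ?_)
    intro ω h; simpa [Real.norm_eq_abs] using h
  have hX2int : ∀ t, 1 ≤ t → Integrable (fun ω => X t ω ^ 2) P := by
    intro t ht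
    refine integrable_of_ae_bound ((hXmeas t ht).pow_const 2).aestronglyMeasurable
      (c := R ^ 2) ((hbdd t ht).mono ?_)
    intro ω h
    rw [Real.norm_eq_abs, abs_of_nonneg (sq_nonneg _), ← sq_abs]
    exact pow_le_pow_left₀ (abs_nonneg _) h 2
  have hCsm : ∀ t, StronglyMeasurable[F (t - 1)] (C t) := fun t => stronglyMeasurable_condExp
  have hCnonneg : ∀ t, 1 ≤ t → (0 : Ω → ℝ) ≤ᵐ[P] C t := fun t ht =>
    condExp_nonneg (Filter.Eventually.of_forall fun ω => sq_nonneg _)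
  -- adaptedness of S, V, g
  have hSsm : ∀ n, StronglyMeasurable[F n] (S n) := by
    intro n
    apply Finset.stronglyMeasurable_fun_sum
    intro t ht
    have ht' := Finset.mem_Icc.1 ht
    exact ((hadapted t ht'.1).le (F.mono ht'.2)).stronglyMeasurable
  have hVsm : ∀ n, StronglyMeasurable[F n] (V n) := by
    intro n
    apply Finset.stronglyMeasurable_fun_sum
    intro t ht
    have ht' := Finset.mem_Icc.1 ht
    exact (hCsm t).mono (F.mono ((Nat.sub_le t 1).trans ht'.2))
  have hgsm : ∀ n, StronglyMeasurable[F n] (g n) := by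
    intro n
    exact Real.continuous_exp.comp_stronglyMeasurable
      ((stronglyMeasurable_const.mul (hSsm n)).sub (stronglyMeasurable_const.mul (hVsm n)))
  have hgpos : ∀ n ω, 0 ≤ g n ω := fun n ω => (Real.exp_pos _).le
  -- a.e. master bounds
  have hXae : ∀ᵐ ω ∂P, ∀ t, 1 ≤ t → |X t ω| ≤ R := by
    rw [ae_all_iff]
    intro t
    by_cases ht : 1 ≤ t
    · filter_upwards [hbdd t ht] with ω h _ using h
    · filter_upwards with ω h using absurd h ht
  have hCae : ∀ᵐ ω ∂P, ∀ t, 1 ≤ t → 0 ≤ C t ω := by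
    rw [ae_all_iff]
    intro t
    by_cases ht : 1 ≤ t
    · filter_upwards [hCnonneg t ht] with ω h _ using h
    · filter_upwards with ω h using absurd h ht
  have hgbdd : ∀ n, ∀ᵐ ω ∂P, ‖g n ω‖ ≤ Real.exp (η * (n * R)) := by
    intro n
    filter_upwards [hXae, hCae] with ω h1 h2
    have hSle : S n ω ≤ n * R := by
      calc S n ω ≤ ∑ t ∈ Finset.Icc 1 n, R :=
            Finset.sum_le_sum fun t ht =>
              (abs_le.1 (h1 t (Finset.mem_Icc.1 ht).1)).2
        _ = n * R := by
            rw [Finset.sum_const, Nat.card_Icc]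
            simp [nsmul_eq_mul]
    have hVnn : 0 ≤ V n ω :=
      Finset.sum_nonneg fun t ht => h2 t (Finset.mem_Icc.1 ht).1
    rw [Real.norm_eq_abs, abs_of_nonneg (hgpos n ω)]
    apply Real.exp_le_exp.2
    nlinarith [sq_nonneg η]
  have hgint : ∀ n, Integrable (g n) P := fun n =>
    integrable_of_ae_bound ((hgsm n).mono (F.le n)).aestronglyMeasurable (hgbdd n)
  -- the supermartingale step
  have hstep : ∀ i, P[g (i + 1) | F i] ≤ᵐ[P] g i := by
    intro i
    have hti : 1 ≤ i + 1 := Nat.le_add_left 1 i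
    set A : Ω → ℝ := fun ω => g i ω * Real.exp (-(η ^ 2 * C (i + 1) ω)) with hAdef
    set h : Ω → ℝ := fun ω => Real.exp (η * X (i + 1) ω) with hhdef
    have hgeq : g (i + 1) = A * h := by
      funext ω
      show Real.exp (η * S (i+1) ω - η ^ 2 * V (i+1) ω) = _
      have e1 : S (i+1) ω = S i ω + X (i+1) ω := Finset.sum_Icc_succ_top hti _
      have e2 : V (i+1) ω = V i ω + C (i+1) ω := Finset.sum_Icc_succ_top hti _
      show _ = g i ω * Real.exp (-(η ^ 2 * C (i + 1) ω)) * Real.exp (η * X (i + 1) ω)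
      rw [e1, e2, hgdef]
      rw [← Real.exp_add, ← Real.exp_add]
      ring_nf
    have hCism : StronglyMeasurable[F i] (C (i + 1)) := hCsm (i + 1)
    have hA_sm : StronglyMeasurable[F i] A :=
      (hgsm i).mul (Real.continuous_exp.comp_stronglyMeasurable
        (stronglyMeasurable_const.mul hCism).neg)
    have hh_int : Integrable h P := by
      refine integrable_of_ae_bound ?_ (c := Real.exp 1) ((hbdd (i+1) hti).mono ?_)
      · exact (Real.continuous_exp.comp_stronglyMeasurable
          (stronglyMeasurable_const.mul ((hadapted (i+1) hti).stronglyMeasurable))).mono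
            (F.le (i+1)) |>.aestronglyMeasurable
      · intro ω hω
        rw [Real.norm_eq_abs, abs_of_nonneg (Real.exp_pos _).le]
        apply Real.exp_le_exp.2
        calc η * X (i+1) ω ≤ η * |X (i+1) ω| := by
              have := le_abs_self (X (i+1) ω); nlinarith
          _ ≤ η * R := by nlinarith
          _ ≤ 1 := hηR'
    have hAh_int : Integrable (A * h) P := hgeq ▸ hgint (i + 1)
    have pull : P[A * h | F i] =ᵐ[P] A * P[h | F i] :=
      condExp_mul_of_stronglyMeasurable_left hA_sm hAh_int hh_int
    have hpt : ∀ᵐ ω ∂P, h ω ≤ 1 + η * X (i+1) ω + η ^ 2 * X (i+1) ω ^ 2 := by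
      filter_upwards [hbdd (i+1) hti] with ω hω
      have hx : |η * X (i+1) ω| ≤ 1 := by
        rw [abs_mul, abs_of_pos hη]
        calc η * |X (i+1) ω| ≤ η * R := by nlinarith
          _ ≤ 1 := hηR'
      have := exp_le_one_add_add_sq hx
      calc h ω = Real.exp (η * X (i+1) ω) := rfl
        _ ≤ 1 + η * X (i+1) ω + (η * X (i+1) ω) ^ 2 := this
        _ = 1 + η * X (i+1) ω + η ^ 2 * X (i+1) ω ^ 2 := by ring
    have hq_int : Integrable (fun ω => 1 + η * X (i+1) ω + η ^ 2 * X (i+1) ω ^ 2) P :=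
      ((integrable_const (1:ℝ)).add ((hXint (i+1) hti).const_mul η)).add
        ((hX2int (i+1) hti).const_mul (η ^ 2))
    have hmono1 : P[h | F i] ≤ᵐ[P]
        P[(fun ω => 1 + η * X (i+1) ω + η ^ 2 * X (i+1) ω ^ 2) | F i] :=
      condExp_mono hh_int hq_int hpt
    have hsplit : P[(fun ω => 1 + η * X (i+1) ω + η ^ 2 * X (i+1) ω ^ 2) | F i]
        =ᵐ[P] fun ω => 1 + η ^ 2 * C (i+1) ω := by
      have h1 : P[(fun ω => 1 + η * X (i+1) ω + η ^ 2 * X (i+1) ω ^ 2) | F i] =ᵐ[P]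
          P[(fun ω => 1 + η * X (i+1) ω) | F i] + P[(fun ω => η ^ 2 * X (i+1) ω ^ 2) | F i] :=
        condExp_add ((integrable_const (1:ℝ)).add ((hXint (i+1) hti).const_mul η))
          ((hX2int (i+1) hti).const_mul (η ^ 2)) (F i)
      have h2 : P[(fun ω => 1 + η * X (i+1) ω) | F i] =ᵐ[P]
          P[(fun _ => (1:ℝ)) | F i] + P[(fun ω => η * X (i+1) ω) | F i] :=
        condExp_add (integrable_const (1:ℝ)) ((hXint (i+1) hti).const_mul η) (F i)
      have h3 : P[(fun ω => η * X (i+1) ω) | F i] =ᵐ[P] η • P[X (i+1) | F i] :=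
        condExp_smul η (X (i+1)) (F i)
      have h4 : P[(fun ω => η ^ 2 * X (i+1) ω ^ 2) | F i] =ᵐ[P]
          (η ^ 2) • P[(fun ω => X (i+1) ω ^ 2) | F i] :=
        condExp_smul (η ^ 2) (fun ω => X (i+1) ω ^ 2) (F i)
      have h5 : P[X (i+1) | F i] =ᵐ[P] 0 := hmds (i+1) hti
      have h6 : P[(fun _ => (1:ℝ)) | F i] = fun _ => (1:ℝ) := condExp_const (F.le i) 1
      filter_upwards [h1, h2, h3, h4, h5] with ω e1 e2 e3 e4 e5
      simp only [Pi.add_apply, Pi.smul_apply, smul_eq_mul] at *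
      have e6 : P[(fun ω => X (i+1) ω ^ 2) | F i] = C (i+1) := rfl
      rw [e1, e2, e3, e4, e5, h6, e6]
      simp
    have hfinal : A * P[h | F i] ≤ᵐ[P] g i := by
      filter_upwards [hmono1, hsplit] with ω e1 e2
      have hAnn : 0 ≤ A ω := mul_nonneg (hgpos i ω) (Real.exp_pos _).le
      have hle : (P[h | F i]) ω ≤ Real.exp (η ^ 2 * C (i+1) ω) := by
        have h7 : (P[h | F i]) ω ≤ 1 + η ^ 2 * C (i+1) ω := by rw [← e2]; exact e1
        have := Real.add_one_le_exp (η ^ 2 * C (i+1) ω)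
        linarith
      calc (A * P[h | F i]) ω = A ω * (P[h | F i]) ω := rfl
        _ ≤ A ω * Real.exp (η ^ 2 * C (i+1) ω) := mul_le_mul_of_nonneg_left hle hAnn
        _ = g i ω := by
            show g i ω * Real.exp (-(η ^ 2 * C (i + 1) ω)) * Real.exp (η ^ 2 * C (i+1) ω) = g i ω
            rw [mul_assoc, ← Real.exp_add, neg_add_cancel, Real.exp_zero, mul_one]
    calc P[g (i+1) | F i] = P[A * h | F i] := by rw [hgeq]
      _ ≤ᵐ[P] g i := pull.trans_le hfinal
  have hsuper : Supermartingale g F P := supermartingale_nat (fun n => hgsm n) hgint hstep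
  have hg0 : ∫ ω, g 0 ω ∂P = 1 := by
    have : g 0 = fun _ => (1:ℝ) := by
      funext ω
      show Real.exp (η * S 0 ω - η ^ 2 * V 0 ω) = 1
      have e1 : S 0 ω = 0 := by
        show ∑ t ∈ Finset.Icc 1 0, X t ω = 0
        simp
      have e2 : V 0 ω = 0 := by
        show ∑ t ∈ Finset.Icc 1 0, C t ω = 0
        simp
      rw [e1, e2]; simp
    rw [this]
    simp
  -- conclusion
  have hsub : {ω | ∃ n : ℕ, 1 ≤ n ∧
        ∑ t ∈ Finset.Icc 1 n, X t ω ≥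
          η * ∑ t ∈ Finset.Icc 1 n, (P[fun ω' => X t ω' ^ 2 | F (t - 1)]) ω +
            (1 / η) * Real.log (1 / δ)} ⊆ {ω | ∃ n, 1 / δ ≤ g n ω} := by
    rintro ω ⟨n, hn1, hge⟩
    refine ⟨n, ?_⟩
    have hge' : S n ω ≥ η * V n ω + (1 / η) * Real.log (1 / δ) := hge
    have hinv : η * (1 / η) = 1 := mul_one_div_cancel hη.ne'
    have hL : Real.log (1 / δ) ≤ η * S n ω - η ^ 2 * V n ω := by
      have h8 : η * (η * V n ω + 1 / η * Real.log (1 / δ)) ≤ η * S n ω :=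
        mul_le_mul_of_nonneg_left hge' hη.le
      have h9 : η * (η * V n ω + 1 / η * Real.log (1 / δ))
          = η ^ 2 * V n ω + Real.log (1 / δ) := by
        field_simp
      linarith
    calc 1 / δ = Real.exp (Real.log (1 / δ)) := (Real.exp_log (by positivity)).symm
      _ ≤ g n ω := Real.exp_le_exp.2 hL
  refine le_trans (measure_mono hsub) ?_
  have hv := ville_aux hsuper hgpos (c := 1 / δ) (by positivity)
  rw [hg0, one_div_one_div] at hv
  exact hv

end Paper
end
end
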